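/- arXiv:2407.18216 — 8 statements merged into one kernel-verified Lean document; each statement's English description precedes it below -/
import Mathlib

section
/- Let Σ = {a, b} with a ≠ b, let u be any string over Σ, let k ≥ 1, and let x = a·u·a·b^k (the concatenation of the character a, the string u, the character a, and k copies of b). Then every border w of x with |w| > k has the form w = s·b^k, where s is a non-empty border of the string a·u·a. -/
/-- `w` is a border of `x`: a prefix and a suffix of `x` different from `x`. -/
def IsBorder {α : Type*} (w x : List α) : Prop :=
  w <+: x ∧ w <:+ x ∧ w ≠ x

theorem IsBorder.of_append_right {α : Type*} {s y r : List α} (h : IsBorder (s ++ r) (y ++ r)) :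
    IsBorder s y := by
  obtain ⟨hpre, hsuf, hne⟩ := h
  have hlen : s.length ≤ y.length := by simpa using hpre.length_le
  refine ⟨?_, List.suffix_append_self_iff.mp hsuf, fun hsy => hne (by rw [hsy])⟩
  exact List.prefix_of_prefix_length_le ((List.prefix_append s r).trans hpre)
    (List.prefix_append y r) hlen

theorem IsBorder.exists_eq_append_of_length_le {α : Type*} {w y r : List α}
    (h : IsBorder w (y ++ r)) (hr : r.length ≤ w.length) :
    ∃ s, IsBorder s y ∧ w = s ++ r := by
  obtain ⟨s, rfl⟩ : r <:+ w := List.suffix_of_suffix_length_le (List.suffix_append y r) h.2.1 hr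
  exact ⟨s, h.of_append_right, rfl⟩

theorem stmt_3_general {α : Type*} (a b : α)
    (u : List α)
    (k : ℕ) (w : List α)
    (hw : IsBorder w ([a] ++ u ++ [a] ++ List.replicate k b))
    (hlen : k < w.length) :
    ∃ s : List α, s ≠ [] ∧ IsBorder s ([a] ++ u ++ [a]) ∧
      w = s ++ List.replicate k b := by
  obtain ⟨s, hs, rfl⟩ := hw.exists_eq_append_of_length_le (by simpa using hlen.le)
  refine ⟨s, ?_, hs, rfl⟩
  rintro rfl
  simp at hlen

/-- Lemma `lemma-border`, structure of long borders.
Over `Σ = {a, b}` with `a ≠ b`, let `u` be any string over `Σ`, `k ≥ 1`, and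
`x = a·u·a·b^k`. Then every border `w` of `x` with `|w| > k` has the form
`w = s·b^k` where `s` is a non-empty border of `a·u·a`. -/
theorem stmt_3 {α : Type*} (a b : α) (hab : a ≠ b)
    (u : List α) (hu : ∀ c ∈ u, c = a ∨ c = b)
    (k : ℕ) (hk : 1 ≤ k) (w : List α)
    (hw : IsBorder w ([a] ++ u ++ [a] ++ List.replicate k b))
    (hlen : k < w.length) :
    ∃ s : List α, s ≠ [] ∧ IsBorder s ([a] ++ u ++ [a]) ∧
      w = s ++ List.replicate k b :=
  stmt_3_general a b u k w hw hlen
end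

section
/- Let Σ = {a, b} with a ≠ b, let u be any string over Σ, let k ≥ 1, and let x = a·u·a·b^k. Then a string w is a non-empty border of x if and only if w = s·b^k for some non-empty border s of a·u·a such that s·b^k is a prefix of x. Consequently, |Border(x)| = k + max{|s| : s a non-empty border of a·u·a with s·b^k a prefix of x} if at least one such s exists, and |Border(x)| = 0 otherwise. -/
open List

section

variable {α : Type*}

theorem IsBorder.append_right_iff {s v r : List α} :
    IsBorder (s ++ r) (v ++ r) ↔ IsBorder s v ∧ s ++ r <+: v ++ r := by
  constructor
  · rintro ⟨hp, hs, hne⟩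
    have hlen : s.length ≤ v.length := by simpa using hp.length_le
    refine ⟨⟨prefix_of_prefix_length_le ((prefix_append s r).trans hp) (prefix_append v r) hlen,
      suffix_append_self_iff.mp hs, fun h => hne (h ▸ rfl)⟩, hp⟩
  · rintro ⟨⟨-, hs, hne⟩, hp⟩
    exact ⟨hp, suffix_append_self_iff.mpr hs, fun h => hne (append_cancel_right h)⟩

theorem exists_ne_nil_eq_append_replicate {a b : α} (hab : a ≠ b) {t l w : List α} {k : ℕ}
    (hw : w ≠ []) (hp : w <+: a :: t) (hs : w <:+ l ++ replicate k b) :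
    ∃ s, s ≠ [] ∧ w = s ++ replicate k b := by
  by_cases hlen : w.length ≤ k
  · have hb : w.head hw = b := eq_of_mem_replicate <|
      (suffix_of_suffix_length_le hs (suffix_append l _) (by simpa using hlen)).subset
        (head_mem hw)
    exact absurd (hb ▸ (hp.head hw).symm) hab
  · obtain ⟨s, rfl⟩ := suffix_of_suffix_length_le (suffix_append l _) hs
      (by simp only [length_replicate]; omega)
    exact ⟨s, by rintro rfl; simp at hlen, rfl⟩

theorem isBorder_cons_append_replicate_iff {a b : α} (hab : a ≠ b) (t : List α) (k : ℕ)
    (w : List α) :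
    w ≠ [] ∧ IsBorder w (a :: t ++ replicate k b) ↔
      ∃ s, s ≠ [] ∧ IsBorder s (a :: t) ∧ w = s ++ replicate k b ∧
        s ++ replicate k b <+: a :: t ++ replicate k b := by
  constructor
  · rintro ⟨hw, hwx⟩
    obtain ⟨s, hs, rfl⟩ := exists_ne_nil_eq_append_replicate hab hw hwx.1 hwx.2.1
    exact ⟨s, hs, (IsBorder.append_right_iff.mp hwx).1, rfl, hwx.1⟩
  · rintro ⟨s, hs, hsb, rfl, hsp⟩
    exact ⟨by simp [hs], IsBorder.append_right_iff.mpr ⟨hsb, hsp⟩⟩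

end

theorem stmt_6_general {α : Type*} (a b : α) (hab : a ≠ b)
    (u : List α)
    (k : ℕ) (bx : List α)
    (hbx : IsBorder bx ([a] ++ u ++ [a] ++ List.replicate k b))
    (hbxmax : ∀ w, IsBorder w ([a] ++ u ++ [a] ++ List.replicate k b) →
      w.length ≤ bx.length) :
    (∀ w : List α,
      (w ≠ [] ∧ IsBorder w ([a] ++ u ++ [a] ++ List.replicate k b)) ↔
      (∃ s : List α, s ≠ [] ∧ IsBorder s ([a] ++ u ++ [a]) ∧
        w = s ++ List.replicate k b ∧
        (s ++ List.replicate k b) <+: ([a] ++ u ++ [a] ++ List.replicate k b))) ∧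
    ((∃ s : List α, s ≠ [] ∧ IsBorder s ([a] ++ u ++ [a]) ∧
        (s ++ List.replicate k b) <+: ([a] ++ u ++ [a] ++ List.replicate k b)) →
      ∃ s : List α, s ≠ [] ∧ IsBorder s ([a] ++ u ++ [a]) ∧
        (s ++ List.replicate k b) <+: ([a] ++ u ++ [a] ++ List.replicate k b) ∧
        bx.length = k + s.length ∧
        (∀ s' : List α, s' ≠ [] → IsBorder s' ([a] ++ u ++ [a]) →
          (s' ++ List.replicate k b) <+: ([a] ++ u ++ [a] ++ List.replicate k b) →
          s'.length ≤ s.length)) ∧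
    ((¬ ∃ s : List α, s ≠ [] ∧ IsBorder s ([a] ++ u ++ [a]) ∧
        (s ++ List.replicate k b) <+: ([a] ++ u ++ [a] ++ List.replicate k b)) →
      bx.length = 0) := by
  have key := isBorder_cons_append_replicate_iff hab (u ++ [a]) k
  refine ⟨key, ?_, fun hno => ?_⟩
  · rintro ⟨s₀, hs₀, hb₀, hp₀⟩
    have hbx_ne : bx ≠ [] := by
      rintro rfl
      have := hbxmax _ ((key _).2 ⟨s₀, hs₀, hb₀, rfl, hp₀⟩).2
      simp_all
    obtain ⟨s, hs, hsb, rfl, hsp⟩ := (key bx).1 ⟨hbx_ne, hbx⟩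
    refine ⟨s, hs, hsb, hsp, by simp [add_comm], fun s' hs' hb' hp' => ?_⟩
    simpa using hbxmax _ ((key _).2 ⟨s', hs', hb', rfl, hp'⟩).2
  · by_contra h
    obtain ⟨s, hs, hsb, -, hsp⟩ := (key bx).1 ⟨ne_nil_of_length_pos (Nat.pos_of_ne_zero h), hbx⟩
    exact hno ⟨s, hs, hsb, hsp⟩

/-- characterization of the non-empty borders of `a·u·a·b^k`.
Over `Σ = {a, b}` with `a ≠ b`, let `u` be any string over `Σ`, `k ≥ 1`, and
`x = a·u·a·b^k`.  A string `w` is a non-empty border of `x` iff `w = s·b^k` for some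
non-empty border `s` of `a·u·a` with `s·b^k` a prefix of `x`.  Consequently, letting
`bx` denote the longest border of `x`: if at least one such `s` exists then
`|bx| = k + max{|s| : s non-empty border of a·u·a, s·b^k prefix of x}`
(witnessed by a maximal such `s`), and otherwise `|bx| = 0`. -/
theorem stmt_6 {α : Type*} (a b : α) (hab : a ≠ b)
    (u : List α) (hu : ∀ c ∈ u, c = a ∨ c = b)
    (k : ℕ) (hk : 1 ≤ k) (bx : List α)
    (hbx : IsBorder bx ([a] ++ u ++ [a] ++ List.replicate k b))
    (hbxmax : ∀ w, IsBorder w ([a] ++ u ++ [a] ++ List.replicate k b) →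
      w.length ≤ bx.length) :
    (∀ w : List α,
      (w ≠ [] ∧ IsBorder w ([a] ++ u ++ [a] ++ List.replicate k b)) ↔
      (∃ s : List α, s ≠ [] ∧ IsBorder s ([a] ++ u ++ [a]) ∧
        w = s ++ List.replicate k b ∧
        (s ++ List.replicate k b) <+: ([a] ++ u ++ [a] ++ List.replicate k b))) ∧
    ((∃ s : List α, s ≠ [] ∧ IsBorder s ([a] ++ u ++ [a]) ∧
        (s ++ List.replicate k b) <+: ([a] ++ u ++ [a] ++ List.replicate k b)) →
      ∃ s : List α, s ≠ [] ∧ IsBorder s ([a] ++ u ++ [a]) ∧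
        (s ++ List.replicate k b) <+: ([a] ++ u ++ [a] ++ List.replicate k b) ∧
        bx.length = k + s.length ∧
        (∀ s' : List α, s' ≠ [] → IsBorder s' ([a] ++ u ++ [a]) →
          (s' ++ List.replicate k b) <+: ([a] ++ u ++ [a] ++ List.replicate k b) →
          s'.length ≤ s.length)) ∧
    ((¬ ∃ s : List α, s ≠ [] ∧ IsBorder s ([a] ++ u ++ [a]) ∧
        (s ++ List.replicate k b) <+: ([a] ++ u ++ [a] ++ List.replicate k b)) →
      bx.length = 0) :=
  stmt_6_general a b hab u k bx hbx hbxmax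
end

section
/- Let x be a string of length m ≥ 2 over an alphabet Σ, let a = x[0], suppose a occurs in x exactly m̄+1 times at positions 0 = δ(0) < δ(1) < ⋯ < δ(m̄), and let x̄ be the integer sequence of length m̄ with x̄[j] = δ(j+1) − δ(j). If p is a period of x with 1 ≤ p ≤ m − 1, then x[p] = a, and for the unique index i₀ with δ(i₀) = p one has: Σ_{j=0}^{i₀−1} x̄[j] = p, and i₀ is a period of x̄ (i.e., x̄[t] = x̄[t + i₀] for all 0 ≤ t < m̄ − i₀). -/
/-!
The occurrences of `a = x 0` form a set `S ⊆ [0, m)` enumerated increasingly by `δ`, and a period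
`p` of `x` makes `q ↦ q + p` an order-preserving bijection from `S ∩ [0, m - p)` onto `S ∩ [p, m)`.
Since `0 ∈ S`, also `p ∈ S`, say `p = δ i₀`; comparing the two enumerations gives
`δ (t + i₀) = δ t + p`, and taking differences shows that `i₀` is a period of the gap sequence.
-/

open Finset

theorem StrictMonoOn.apply_succ_le_of_apply_lt {δ : ℕ → ℕ} {n j k : ℕ}
    (hδ : StrictMonoOn δ (Set.Iic n)) (hj : j ≤ n) (hk : k ≤ n) (h : δ j < δ k) :
    δ (j + 1) ≤ δ k := by
  have hjk : j < k := (hδ.lt_iff_lt hj hk).mp h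
  exact (hδ.le_iff_le (show j + 1 ≤ n by omega) hk).mpr hjk

theorem sum_range_eq_sub_of_eq_sub {δ xbar : ℕ → ℕ} {n : ℕ} (hδ : MonotoneOn δ (Set.Iic n))
    (hxbar : ∀ j, j < n → xbar j = δ (j + 1) - δ j) :
    ∀ k ≤ n, ∑ j ∈ range k, xbar j = δ k - δ 0 := by
  intro k
  induction k with
  | zero => simp
  | succ k ih =>
    intro hk
    have hstep : δ k ≤ δ (k + 1) := hδ (show k ≤ n by omega) hk (by omega)
    have hbase : δ 0 ≤ δ k := hδ (show 0 ≤ n by omega) (show k ≤ n by omega) (by omega)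
    rw [sum_range_succ, ih (by omega), hxbar k (by omega)]
    omega

theorem apply_add_eq_apply_add_of_periodic {P : ℕ → Prop} {δ : ℕ → ℕ} {n m p i₀ : ℕ}
    (hδ : StrictMonoOn δ (Set.Iic n)) (hlt : ∀ i ≤ n, δ i < m)
    (hocc : ∀ q < m, (P q ↔ ∃ j ≤ n, δ j = q))
    (hper : ∀ q, q + p < m → (P q ↔ P (q + p)))
    (hδ0 : δ 0 = 0) (hi₀ : δ i₀ = p) :
    ∀ t, t + i₀ ≤ n → δ (t + i₀) = δ t + p := by
  intro t
  induction t with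
  | zero => intro _; rw [zero_add, hδ0, zero_add, hi₀]
  | succ t ih =>
    intro hle
    have hprev : δ (t + i₀) = δ t + p := ih (by omega)
    have hnext : δ (t + i₀) < δ (t + 1 + i₀) := hδ (show t + i₀ ≤ n by omega) hle (by omega)
    have hm : δ (t + 1 + i₀) < m := hlt _ hle
    -- `δ (t + 1 + i₀) - p` is an occurrence beyond `δ t`, hence at least `δ (t + 1)`.
    have hge : δ (t + 1) + p ≤ δ (t + 1 + i₀) := by
      have hP : P (δ (t + 1 + i₀) - p) := by
        rw [hper _ (by omega), Nat.sub_add_cancel (by omega)]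
        exact (hocc _ hm).mpr ⟨_, hle, rfl⟩
      obtain ⟨j, hj, hδj⟩ := (hocc _ (by omega)).mp hP
      have := hδ.apply_succ_le_of_apply_lt (show t ≤ n by omega) hj (by omega)
      omega
    -- `δ (t + 1) + p` is an occurrence beyond `δ (t + i₀)`, hence at least `δ (t + 1 + i₀)`.
    have hle' : δ (t + 1 + i₀) ≤ δ (t + 1) + p := by
      have hP : P (δ (t + 1) + p) := by
        rw [← hper _ (by omega)]
        exact (hocc _ (hlt _ (by omega))).mpr ⟨t + 1, by omega, rfl⟩
      obtain ⟨k, hk, hδk⟩ := (hocc _ (by omega)).mp hP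
      have hδt : δ t < δ (t + 1) := hδ (show t ≤ n by omega) (show t + 1 ≤ n by omega) (by omega)
      have := hδ.apply_succ_le_of_apply_lt (show t + i₀ ≤ n by omega) hk (by omega)
      rwa [show t + i₀ + 1 = t + 1 + i₀ by omega, hδk] at this
    omega

theorem stmt_7_general {α : Type*} (m mbar : ℕ)
    (x : ℕ → α) (a : α) (ha : x 0 = a)
    (δ : ℕ → ℕ) (xbar : ℕ → ℕ) (hδ0 : δ 0 = 0)
    (hmono : ∀ i j, i < j → j ≤ mbar → δ i < δ j)
    (hlt : ∀ i, i ≤ mbar → δ i < m)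
    (hocc : ∀ i, i < m → (x i = a ↔ ∃ j, j ≤ mbar ∧ δ j = i))
    (hxbar : ∀ j, j < mbar → xbar j = δ (j + 1) - δ j)
    (p : ℕ) (hp1 : 1 ≤ p) (hp2 : p ≤ m - 1)
    (hper : ∀ i, i + p < m → x i = x (i + p)) :
    x p = a ∧
    (∃! i₀ : ℕ, i₀ ≤ mbar ∧ δ i₀ = p) ∧
    (∀ i₀ : ℕ, i₀ ≤ mbar → δ i₀ = p →
      (∑ j ∈ Finset.range i₀, xbar j) = p ∧
      1 ≤ i₀ ∧ i₀ ≤ mbar ∧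
      ∀ t, t + i₀ < mbar → xbar t = xbar (t + i₀)) := by
  have hδ : StrictMonoOn δ (Set.Iic mbar) := fun i _ j hj hij => hmono i j hij hj
  have hxp : x p = a := by rw [← ha, hper 0 (by omega), zero_add]
  obtain ⟨i₀, hi₀, hδi₀⟩ := (hocc p (by omega)).mp hxp
  refine ⟨hxp, ⟨i₀, ⟨hi₀, hδi₀⟩, fun j ⟨hj, hδj⟩ => hδ.injOn hj hi₀ (hδj.trans hδi₀.symm)⟩, ?_⟩
  intro i hi hδi
  have hi1 : 1 ≤ i := Nat.one_le_iff_ne_zero.mpr (by rintro rfl; omega)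
  have hshift := apply_add_eq_apply_add_of_periodic hδ hlt hocc
    (fun q hq => by rw [hper q hq]) hδ0 hδi
  refine ⟨?_, hi1, hi, fun t ht => ?_⟩
  · rw [sum_range_eq_sub_of_eq_sub hδ.monotoneOn hxbar i hi, hδi, hδ0, Nat.sub_zero]
  · rw [hxbar t (by omega), hxbar (t + i) ht, show t + i + 1 = t + 1 + i by omega,
      hshift t (by omega), hshift (t + 1) (by omega)]
    omega

/-- a period of `x` induces a period of its CDS representation.
`x : ℕ → α` is a string of length `m ≥ 2`, `a = x 0` occurs in `x` exactly `mbar + 1`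
times at positions `0 = δ 0 < δ 1 < ⋯ < δ mbar`, and `xbar j = δ (j+1) - δ j` for
`j < mbar`.  If `p` is a period of `x` with `1 ≤ p ≤ m - 1`, then `x p = a`; moreover
there is a unique index `i₀ ≤ mbar` with `δ i₀ = p`, and for this `i₀` one has
`∑_{j=0}^{i₀-1} xbar j = p` and `i₀` is a period of `xbar` (so `1 ≤ i₀ ≤ mbar` and
`xbar t = xbar (t + i₀)` for all `t` with `t + i₀ < mbar`). -/
theorem stmt_7 {α : Type*} (m mbar : ℕ) (hm : 2 ≤ m)
    (x : ℕ → α) (a : α) (ha : x 0 = a)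
    (δ : ℕ → ℕ) (xbar : ℕ → ℕ) (hδ0 : δ 0 = 0)
    (hmono : ∀ i j, i < j → j ≤ mbar → δ i < δ j)
    (hlt : ∀ i, i ≤ mbar → δ i < m)
    (hocc : ∀ i, i < m → (x i = a ↔ ∃ j, j ≤ mbar ∧ δ j = i))
    (hxbar : ∀ j, j < mbar → xbar j = δ (j + 1) - δ j)
    (p : ℕ) (hp1 : 1 ≤ p) (hp2 : p ≤ m - 1)
    (hper : ∀ i, i + p < m → x i = x (i + p)) :
    x p = a ∧
    (∃! i₀ : ℕ, i₀ ≤ mbar ∧ δ i₀ = p) ∧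
    (∀ i₀ : ℕ, i₀ ≤ mbar → δ i₀ = p →
      (∑ j ∈ Finset.range i₀, xbar j) = p ∧
      1 ≤ i₀ ∧ i₀ ≤ mbar ∧
      ∀ t, t + i₀ < mbar → xbar t = xbar (t + i₀)) :=
  stmt_7_general m mbar x a ha δ xbar hδ0 hmono hlt hocc hxbar p hp1 hp2 hper
end

section
/- Let Σ = {a, b} with a ≠ b, let x be a string of length m ≥ 2 over Σ with x[0] = x[m−1] = a, suppose a occurs in x exactly m̄+1 times (so m̄ ≥ 1) at positions 0 = δ(0) < δ(1) < ⋯ < δ(m̄) = m−1, and let x̄ be the integer sequence of length m̄ with x̄[j] = δ(j+1) − δ(j). If q is a period of x̄ (1 ≤ q ≤ m̄), then s = Σ_{i=0}^{q−1} x̄[i] is a period of x. -/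
/-!
The occurrences of `a` are the partial sums `δ n = ∑_{i<n} x̄[i]`, so periodicity of `x̄` with
period `q` says that shifting by `s = δ q` maps occurrence `δ j` to occurrence `δ (j + q)`.
Inside the string, the occurrences of `a` are therefore invariant under the shift by `s`, and
over a two-letter alphabet the positions of `a` determine the string.
-/

open Finset

section PartialSums

variable {δ xbar : ℕ → ℕ} {mbar : ℕ}

lemma eq_add_sum_range_of_step (hstep : ∀ j < mbar, δ (j + 1) = δ j + xbar j) :
    ∀ n ≤ mbar, δ n = δ 0 + ∑ i ∈ range n, xbar i := by
  intro n
  induction n with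
  | zero => simp
  | succ n ih =>
    intro hn
    rw [sum_range_succ, ← add_assoc, ← ih (by omega), hstep n (by omega)]

lemma add_eq_add_sum_range_of_periodic (hstep : ∀ j < mbar, δ (j + 1) = δ j + xbar j) {q : ℕ}
    (hper : ∀ t, t + q < mbar → xbar t = xbar (t + q)) :
    ∀ j, j + q ≤ mbar → δ (j + q) = δ j + ∑ i ∈ range q, xbar i := by
  intro j
  induction j with
  | zero => simpa using eq_add_sum_range_of_step hstep q
  | succ j ih =>
    intro hj
    rw [show j + 1 + q = j + q + 1 by omega, hstep (j + q) (by omega), ih (by omega),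
      ← hper j (by omega), hstep j (by omega)]
    omega

end PartialSums

lemma mem_image_iff_add_mem_image {δ : ℕ → ℕ} {mbar q s i : ℕ}
    (hmono : StrictMonoOn δ (Set.Iic mbar)) (hq : q ≤ mbar)
    (hshift : ∀ j, j + q ≤ mbar → δ (j + q) = δ j + s)
    (hi0 : δ 0 ≤ i) (hilast : i + s ≤ δ mbar) :
    i ∈ δ '' Set.Iic mbar ↔ i + s ∈ δ '' Set.Iic mbar := by
  constructor
  · rintro ⟨j, hj : j ≤ mbar, rfl⟩
    have hjq : j + q ≤ mbar := by
      by_contra! h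
      have hlt : δ (mbar - q) < δ j :=
        hmono (Set.mem_Iic.2 (by omega)) hj (by omega)
      have := hshift (mbar - q) (by omega)
      rw [Nat.sub_add_cancel hq] at this
      omega
    exact ⟨j + q, hjq, hshift j hjq⟩
  · rintro ⟨j, hj : j ≤ mbar, hji⟩
    have hqj : q ≤ j := by
      by_contra! h
      have hlt : δ j < δ q := hmono (Set.mem_Iic.2 (by omega)) (Set.mem_Iic.2 hq) h
      have := hshift 0 (by omega)
      simp only [zero_add] at this
      omega
    have := hshift (j - q) (by omega)
    rw [Nat.sub_add_cancel hqj] at this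
    exact ⟨j - q, Set.mem_Iic.2 (by omega), by omega⟩

lemma eq_of_eq_iff_of_mem_pair {α : Type*} {a b u v : α} (hu : u = a ∨ u = b)
    (hv : v = a ∨ v = b) (h : u = a ↔ v = a) : u = v := by
  rcases hu with rfl | rfl <;> rcases hv with rfl | rfl <;> simp_all

theorem stmt_8_general {α : Type*} (a b : α)
    (m mbar : ℕ)
    (x : ℕ → α) (hbin : ∀ i, i < m → x i = a ∨ x i = b)
    (δ : ℕ → ℕ) (xbar : ℕ → ℕ) (hδ0 : δ 0 = 0) (hδlast : δ mbar = m - 1)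
    (hmono : ∀ i j, i < j → j ≤ mbar → δ i < δ j)
    (hocc : ∀ i, i < m → (x i = a ↔ ∃ j, j ≤ mbar ∧ δ j = i))
    (hxbar : ∀ j, j < mbar → xbar j = δ (j + 1) - δ j)
    (q : ℕ) (hq1 : 1 ≤ q) (hq2 : q ≤ mbar)
    (hqper : ∀ t, t + q < mbar → xbar t = xbar (t + q)) :
    1 ≤ ∑ i ∈ Finset.range q, xbar i ∧
    (∑ i ∈ Finset.range q, xbar i) ≤ m ∧
    ∀ i, i + (∑ i ∈ Finset.range q, xbar i) < m →
      x i = x (i + ∑ i ∈ Finset.range q, xbar i) := by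
  have hstrict : StrictMonoOn δ (Set.Iic mbar) := fun i _ j hj hij => hmono i j hij hj
  have hstep : ∀ j < mbar, δ (j + 1) = δ j + xbar j := fun j hj => by
    have := hmono j (j + 1) j.lt_succ_self hj
    rw [hxbar j hj]
    omega
  have hshift := add_eq_add_sum_range_of_periodic hstep hqper
  set s := ∑ i ∈ Finset.range q, xbar i
  have hδq : δ q = s := by simpa [hδ0] using hshift 0 (by omega)
  have hpos : δ 0 < δ q := hmono 0 q hq1 hq2
  have hle : δ q ≤ δ mbar :=
    (hstrict.le_iff_le (Set.mem_Iic.2 hq2) (Set.mem_Iic.2 le_rfl)).2 hq2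
  refine ⟨by omega, by omega, fun i hi =>
    eq_of_eq_iff_of_mem_pair (hbin i (by omega)) (hbin _ hi) ?_⟩
  rw [hocc i (by omega), hocc _ hi]
  exact mem_image_iff_add_mem_image hstrict hq2 hshift (by omega) (by omega)

/-- a period of the CDS representation induces a period of `x`.
Over `Σ = {a, b}` with `a ≠ b`, `x : ℕ → α` is a string of length `m ≥ 2` over
`{a, b}` with `x 0 = x (m-1) = a`; `a` occurs in `x` exactly `mbar + 1` times
(`mbar ≥ 1`) at positions `0 = δ 0 < δ 1 < ⋯ < δ mbar = m - 1`, and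
`xbar j = δ (j+1) - δ j` for `j < mbar`.  If `q` is a period of `xbar`
(`1 ≤ q ≤ mbar`), then `s = ∑_{i=0}^{q-1} xbar i` is a period of `x`, i.e.
`1 ≤ s ≤ m` and `x i = x (i + s)` for all `i` with `i + s < m`. -/
theorem stmt_8 {α : Type*} (a b : α) (hab : a ≠ b)
    (m mbar : ℕ) (hm : 2 ≤ m) (hmbar : 1 ≤ mbar)
    (x : ℕ → α) (hbin : ∀ i, i < m → x i = a ∨ x i = b)
    (h0 : x 0 = a) (hlast : x (m - 1) = a)
    (δ : ℕ → ℕ) (xbar : ℕ → ℕ) (hδ0 : δ 0 = 0) (hδlast : δ mbar = m - 1)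
    (hmono : ∀ i j, i < j → j ≤ mbar → δ i < δ j)
    (hocc : ∀ i, i < m → (x i = a ↔ ∃ j, j ≤ mbar ∧ δ j = i))
    (hxbar : ∀ j, j < mbar → xbar j = δ (j + 1) - δ j)
    (q : ℕ) (hq1 : 1 ≤ q) (hq2 : q ≤ mbar)
    (hqper : ∀ t, t + q < mbar → xbar t = xbar (t + q)) :
    1 ≤ ∑ i ∈ Finset.range q, xbar i ∧
    (∑ i ∈ Finset.range q, xbar i) ≤ m ∧
    ∀ i, i + (∑ i ∈ Finset.range q, xbar i) < m →
      x i = x (i + ∑ i ∈ Finset.range q, xbar i) :=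
  stmt_8_general a b m mbar x hbin δ xbar hδ0 hδlast hmono hocc hxbar q hq1 hq2 hqper
end

section
/- Let Σ = {a, b} with a ≠ b, let x be a string of length m ≥ 2 over Σ with x[0] = x[m−1] = a, suppose a occurs in x exactly m̄+1 times (so m̄ ≥ 1) at positions 0 = δ(0) < δ(1) < ⋯ < δ(m̄) = m−1, and let x̄ be the integer sequence of length m̄ with x̄[j] = δ(j+1) − δ(j). Then the smallest period of x equals the sum of the first per(x̄) entries of x̄: per(x) = Σ_{i=0}^{per(x̄)−1} x̄[i], where per denotes the smallest period. -/
/-!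
Let `δ` enumerate the positions of `a` in `x`, so that `x̄` is its sequence of gaps. A shift `r`
is a period of `x̄` exactly when `δ (j + r) = δ j + δ r` wherever defined, and since `x` is binary,
a shift `d` is a period of `x` exactly when it maps `a`-positions to `a`-positions in both
directions. These two conditions correspond under `d = δ r`: a period `r` of `x̄` yields the period
`δ r` of `x`, and a period `p < m` of `x` is itself an `a`-position `δ r` (as `x 0 = a`) with `r` a
period of `x̄`. Minimality on both sides then forces `per(x) = δ (per(x̄)) = ∑_{i < per(x̄)} x̄ i`.
-/

open Set

def HasPeriodOn {β : Type*} (f : ℕ → β) (len p : ℕ) : Prop :=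
  ∀ i, i + p < len → f i = f (i + p)

theorem hasPeriodOn_iff_of_binary {α : Type*} {a b : α} (hab : a ≠ b) {x : ℕ → α} {m d : ℕ}
    (hbin : ∀ i < m, x i = a ∨ x i = b) :
    HasPeriodOn x m d ↔ ∀ i, i + d < m → (x i = a ↔ x (i + d) = a) := by
  refine ⟨fun h i hi => by rw [h i hi], fun h i hi => ?_⟩
  rcases hbin i (by omega) with hi_a | hi_b <;> rcases hbin (i + d) hi with hd_a | hd_b
  · rw [hi_a, hd_a]
  · exact absurd (hd_b ▸ (h i hi).1 hi_a) hab.symm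
  · exact absurd (hi_b ▸ (h i hi).2 hd_a) hab.symm
  · rw [hi_b, hd_b]

section Gaps

variable {δ xbar : ℕ → ℕ} {n r : ℕ}

theorem sum_range_gaps_eq (hδ0 : δ 0 = 0) (hδ : MonotoneOn δ (Iic n))
    (hxbar : ∀ j < n, xbar j = δ (j + 1) - δ j) : ∀ j ≤ n, ∑ i ∈ Finset.range j, xbar i = δ j := by
  intro j hj
  induction j with
  | zero => simp [hδ0]
  | succ j ih =>
    have hstep : δ j ≤ δ (j + 1) := hδ (show j ≤ n by omega) hj (by omega)
    rw [Finset.sum_range_succ, ih (by omega), hxbar j (by omega)]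
    omega

theorem add_shift_of_hasPeriodOn_gaps (hδ0 : δ 0 = 0) (hδ : MonotoneOn δ (Iic n))
    (hxbar : ∀ j < n, xbar j = δ (j + 1) - δ j) (hper : HasPeriodOn xbar n r) :
    ∀ j, j + r ≤ n → δ (j + r) = δ j + δ r := by
  intro j
  induction j with
  | zero => simp [hδ0]
  | succ j ih =>
    intro hj
    have hδj : δ j ≤ δ (j + 1) := hδ (show j ≤ n by omega) (show j + 1 ≤ n by omega) (by omega)
    have hδjr : δ (j + r) ≤ δ (j + r + 1) :=
      hδ (show j + r ≤ n by omega) (show j + r + 1 ≤ n by omega) (by omega)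
    have ih := ih (by omega)
    have hper_j := hper j (by omega)
    have hgap_j := hxbar j (by omega)
    have hgap_jr := hxbar (j + r) (by omega)
    rw [show j + 1 + r = j + r + 1 by omega]
    omega

theorem hasPeriodOn_gaps_of_add_shift (hxbar : ∀ j < n, xbar j = δ (j + 1) - δ j)
    (hadd : ∀ j, j + r ≤ n → δ (j + r) = δ j + δ r) : HasPeriodOn xbar n r := by
  intro t ht
  rw [hxbar t (by omega), hxbar (t + r) ht, show t + r + 1 = t + 1 + r by omega,
    hadd (t + 1) (by omega), hadd t (by omega)]
  omega

end Gaps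

section Occurrences

variable {α : Type*} {x : ℕ → α} {a : α} {m n r : ℕ} {δ : ℕ → ℕ}

theorem occ_shift_of_add_shift (hδ : StrictMonoOn δ (Iic n)) (hlast : δ n + 1 = m)
    (hocc : ∀ i, i < m → (x i = a ↔ ∃ j, j ≤ n ∧ δ j = i)) (hr : r ≤ n)
    (hadd : ∀ j, j + r ≤ n → δ (j + r) = δ j + δ r) :
    ∀ i, i + δ r < m → (x i = a ↔ x (i + δ r) = a) := by
  intro i hi
  rw [hocc i (by omega), hocc (i + δ r) hi]
  constructor
  · rintro ⟨j, hj, rfl⟩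
    have hjr : j + r ≤ n := by
      by_contra! h
      have hlt : δ (n - r) < δ j := hδ (show n - r ≤ n by omega) hj (by omega)
      have := hadd (n - r) (by omega)
      rw [Nat.sub_add_cancel hr] at this
      omega
    exact ⟨j + r, hjr, hadd j hjr⟩
  · rintro ⟨k, hk, hki⟩
    have hrk : r ≤ k := (hδ.le_iff_le hr hk).1 (by omega)
    have := hadd (k - r) (by omega)
    rw [Nat.sub_add_cancel hrk] at this
    exact ⟨k - r, by omega, by omega⟩

theorem add_shift_of_occ_shift (hδ0 : δ 0 = 0) (hδ : StrictMonoOn δ (Iic n)) (hlast : δ n < m)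
    (hocc : ∀ i, i < m → (x i = a ↔ ∃ j, j ≤ n ∧ δ j = i))
    (hshift : ∀ i, i + δ r < m → (x i = a ↔ x (i + δ r) = a)) :
    ∀ j, j + r ≤ n → δ (j + r) = δ j + δ r := by
  have hlt : ∀ j ≤ n, δ j < m := fun j hj => (hδ.monotoneOn hj (le_refl n) hj).trans_lt hlast
  have hmem : ∀ j ≤ n, x (δ j) = a := fun j hj => (hocc _ (hlt j hj)).2 ⟨j, hj, rfl⟩
  intro j
  induction j with
  | zero => simp [hδ0]
  | succ j ih =>
    intro hj
    have ih := ih (by omega)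
    have hδ_lt := hlt _ hj
    have hstep : δ (j + r) < δ (j + 1 + r) := hδ (show j + r ≤ n by omega) hj (by omega)
    -- `δ (j + 1 + r) - δ r` and `δ (j + 1) + δ r` are `a`-positions beyond `δ j` and `δ (j + r)`
    -- respectively, so they are at least the next ones, `δ (j + 1)` and `δ (j + 1 + r)`.
    have hback : x (δ (j + 1 + r) - δ r + δ r) = a := by
      rw [Nat.sub_add_cancel (by omega)]
      exact hmem _ hj
    obtain ⟨k, hk, hδk⟩ := (hocc _ (by omega)).1 <|
      (hshift (δ (j + 1 + r) - δ r) (by omega)).2 hback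
    have hjk : j + 1 ≤ k := (hδ.lt_iff_lt (show j ≤ n by omega) hk).1 (by omega)
    have hbelow : δ (j + 1) ≤ δ k := hδ.monotoneOn (show j + 1 ≤ n by omega) hk hjk
    obtain ⟨l, hl, hδl⟩ := (hocc _ (by omega)).1 <|
      (hshift (δ (j + 1)) (by omega)).1 (hmem _ (by omega))
    have hδj : δ j < δ (j + 1) := hδ (show j ≤ n by omega) (show j + 1 ≤ n by omega) (by omega)
    have hjl : j + r < l := (hδ.lt_iff_lt (show j + r ≤ n by omega) hl).1 (by omega)
    have habove : δ (j + 1 + r) ≤ δ l := hδ.monotoneOn hj hl (by omega)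
    omega

end Occurrences

theorem stmt_9_general {α : Type*} (a b : α) (hab : a ≠ b)
    (m mbar : ℕ)
    (x : ℕ → α) (hbin : ∀ i, i < m → x i = a ∨ x i = b)
    (h0 : x 0 = a)
    (δ : ℕ → ℕ) (xbar : ℕ → ℕ) (hδ0 : δ 0 = 0) (hδlast : δ mbar = m - 1)
    (hmono : ∀ i j, i < j → j ≤ mbar → δ i < δ j)
    (hocc : ∀ i, i < m → (x i = a ↔ ∃ j, j ≤ mbar ∧ δ j = i))
    (hxbar : ∀ j, j < mbar → xbar j = δ (j + 1) - δ j)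
    (p : ℕ)
    (hp : 1 ≤ p ∧ p ≤ m ∧ ∀ i, i + p < m → x i = x (i + p))
    (hpmin : ∀ p', (1 ≤ p' ∧ p' ≤ m ∧ ∀ i, i + p' < m → x i = x (i + p')) → p ≤ p')
    (q : ℕ)
    (hq : 1 ≤ q ∧ q ≤ mbar ∧ ∀ t, t + q < mbar → xbar t = xbar (t + q))
    (hqmin : ∀ q', (1 ≤ q' ∧ q' ≤ mbar ∧ ∀ t, t + q' < mbar → xbar t = xbar (t + q')) →
      q ≤ q') :
    p = ∑ i ∈ Finset.range q, xbar i := by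
  obtain ⟨hp1, hpm, hpper⟩ := hp
  obtain ⟨hq1, hqm, hqper⟩ := hq
  have hδ : StrictMonoOn δ (Iic mbar) := fun i _ j hj hij => hmono i j hij hj
  have hend : δ mbar + 1 = m := by omega
  have hδq_pos : δ 0 < δ q := hδ (show 0 ≤ mbar by omega) hqm (by omega)
  have hδq_le : δ q ≤ δ mbar := hδ.monotoneOn hqm (le_refl mbar) hqm
  have hperq : HasPeriodOn x m (δ q) := (hasPeriodOn_iff_of_binary hab hbin).2 <|
    occ_shift_of_add_shift hδ hend hocc hqm <|
      add_shift_of_hasPeriodOn_gaps hδ0 hδ.monotoneOn hxbar hqper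
  have hpq : p ≤ δ q := hpmin _ ⟨by omega, by omega, hperq⟩
  have hxp : x p = a := by rw [← h0, hpper 0 (by omega), zero_add]
  obtain ⟨r, hr, rfl⟩ := (hocc p (by omega)).1 hxp
  have hr1 : 1 ≤ r := Nat.one_le_iff_ne_zero.2 fun h => by subst h; omega
  have hperr : HasPeriodOn xbar mbar r := hasPeriodOn_gaps_of_add_shift hxbar <|
    add_shift_of_occ_shift hδ0 hδ (by omega) hocc <|
      (hasPeriodOn_iff_of_binary hab hbin).1 hpper
  have hqr : δ q ≤ δ r := hδ.monotoneOn hqm hr (hqmin r ⟨hr1, hr, hperr⟩)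
  rw [sum_range_gaps_eq hδ0 hδ.monotoneOn hxbar q hqm]
  omega

/-- `per(x) = ∑_{i<per(x̄)} x̄[i]`.
Over `Σ = {a, b}` with `a ≠ b`, `x : ℕ → α` is a string of length `m ≥ 2` over
`{a, b}` with `x 0 = x (m-1) = a`; `a` occurs in `x` exactly `mbar + 1` times
(`mbar ≥ 1`) at positions `0 = δ 0 < δ 1 < ⋯ < δ mbar = m - 1`, and
`xbar j = δ (j+1) - δ j` for `j < mbar`.  If `p` is the smallest period of `x`
and `q` is the smallest period of `xbar`, then `p = ∑_{i=0}^{q-1} xbar i`. -/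
theorem stmt_9 {α : Type*} (a b : α) (hab : a ≠ b)
    (m mbar : ℕ) (hm : 2 ≤ m) (hmbar : 1 ≤ mbar)
    (x : ℕ → α) (hbin : ∀ i, i < m → x i = a ∨ x i = b)
    (h0 : x 0 = a) (hlast : x (m - 1) = a)
    (δ : ℕ → ℕ) (xbar : ℕ → ℕ) (hδ0 : δ 0 = 0) (hδlast : δ mbar = m - 1)
    (hmono : ∀ i j, i < j → j ≤ mbar → δ i < δ j)
    (hocc : ∀ i, i < m → (x i = a ↔ ∃ j, j ≤ mbar ∧ δ j = i))
    (hxbar : ∀ j, j < mbar → xbar j = δ (j + 1) - δ j)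
    (p : ℕ)
    (hp : 1 ≤ p ∧ p ≤ m ∧ ∀ i, i + p < m → x i = x (i + p))
    (hpmin : ∀ p', (1 ≤ p' ∧ p' ≤ m ∧ ∀ i, i + p' < m → x i = x (i + p')) → p ≤ p')
    (q : ℕ)
    (hq : 1 ≤ q ∧ q ≤ mbar ∧ ∀ t, t + q < mbar → xbar t = xbar (t + q))
    (hqmin : ∀ q', (1 ≤ q' ∧ q' ≤ mbar ∧ ∀ t, t + q' < mbar → xbar t = xbar (t + q')) →
      q ≤ q') :
    p = ∑ i ∈ Finset.range q, xbar i :=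
  stmt_9_general a b hab m mbar x hbin h0 δ xbar hδ0 hδlast hmono hocc hxbar p hp hpmin q hq hqmin
end

section
/- Let x be a non-empty string, let c be a cover of x, and let w be a border of x with |w| ≥ |c|. Then c is a cover of w. -/
/-!
Since `x` is non-empty, its first position is covered, so `c` is a prefix of `x`; being no longer
than the prefix `w`, it is then a prefix of `w`. Writing `x = t ++ w`, every position of `w` is
covered in `x` by an occurrence of `c` that either starts inside `w`, and so is an occurrence in `w`,
or starts inside `t`, and then the position lies within the first `|c|` letters of `w`, which the
prefix occurrence covers.
-/

/-- `v` occurs in `x` at position `j`: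
`0 ≤ j ≤ |x| - |v|` and `x[j .. j+|v|-1] = v`. -/
def Occurs {α : Type*} (v x : List α) (j : ℕ) : Prop :=
  (x.drop j).take v.length = v

/-- `v` is a cover of `x`: every position of `x` lies inside some occurrence of `v`. -/
def IsCover {α : Type*} (v x : List α) : Prop :=
  ∀ i, i < x.length → ∃ j, Occurs v x j ∧ j ≤ i ∧ i < j + v.length

theorem occurs_zero_iff {α : Type*} {v x : List α} : Occurs v x 0 ↔ v <+: x := by
  rw [Occurs, List.drop_zero, List.prefix_iff_eq_take, eq_comm]

theorem occurs_append_left_iff {α : Type*} {v t w : List α} {k : ℕ} :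
    Occurs v (t ++ w) (t.length + k) ↔ Occurs v w k := by
  rw [Occurs, Occurs, List.drop_length_add_append]

theorem IsCover.prefix {α : Type*} {c x : List α} (hc : IsCover c x) (hx : x ≠ []) : c <+: x := by
  obtain ⟨j, hocc, hj, -⟩ := hc 0 (List.length_pos_iff.mpr hx)
  rwa [Nat.le_zero.mp hj, occurs_zero_iff] at hocc

theorem IsCover.of_suffix {α : Type*} {c x w : List α} (hc : IsCover c x) (hw : w <:+ x)
    (hcw : c <+: w) : IsCover c w := by
  obtain ⟨t, rfl⟩ := hw
  intro i hi
  obtain ⟨j, hocc, hji, hij⟩ := hc (t.length + i) (by simp only [List.length_append]; omega)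
  by_cases hj : t.length ≤ j
  · obtain ⟨k, rfl⟩ := Nat.exists_eq_add_of_le hj
    exact ⟨k, occurs_append_left_iff.mp hocc, by omega, by omega⟩
  · exact ⟨0, occurs_zero_iff.mpr hcw, by omega, by omega⟩

/-- Let `x` be a non-empty string, `c` a cover of `x`, and `w` a border of `x`
with `|w| ≥ |c|`. Then `c` is a cover of `w`. -/
theorem stmt_11 {α : Type*} (x c w : List α) (hx : x ≠ [])
    (hc : IsCover c x) (hw : IsBorder w x) (hlen : c.length ≤ w.length) :
    IsCover c w :=
  hc.of_suffix hw.2.1 (List.prefix_of_prefix_length_le (hc.prefix hx) hw.1 hlen)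
end

section
/- Let w be a non-empty string and let p be a period of w (1 ≤ p ≤ |w|). Then the prefix of w of length p + (|w| mod p) is a cover of w. Equivalently, if w = uʳu′ where |u| = p, r ≥ 1, and u′ is the (possibly empty) proper prefix of u of length |w| mod p, then u·u′ covers w. -/
theorem List.HasPeriod.occurs_take {α : Type*} {w : List α} {p k m : ℕ} (per : w.HasPeriod p)
    (hfit : k * p + m ≤ w.length) : Occurs (w.take m) w (k * p) := by
  have hlen : (w.take m).length = m := by simp; omega
  unfold Occurs
  rw [hlen]
  refine List.ext_getElem? fun a ↦ ?_
  simp only [List.getElem?_take, List.getElem?_drop]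
  split_ifs with ha
  · rw [← per.getElem?_mod p _ w (by omega), ← per.getElem?_mod p a w (by omega),
      Nat.mul_add_mod_self_right]
  · rfl

theorem isCover_of_occurs_mul {α : Type*} {v w : List α} {p : ℕ} (hp : 0 < p)
    (hpv : p ≤ v.length) (hvw : v.length ≤ w.length) (hdvd : p ∣ w.length - v.length)
    (hocc : ∀ k, k * p + v.length ≤ w.length → Occurs v w (k * p)) : IsCover v w := by
  intro i hi
  obtain ⟨q, hq⟩ := hdvd
  have hlast : q * p + v.length = w.length := by rw [Nat.mul_comm, ← hq]; omega
  have hi_mod : i / p * p ≤ i ∧ i < i / p * p + p := by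
    have := Nat.div_add_mod' i p
    have := Nat.mod_lt i hp
    omega
  rcases le_total (i / p) q with hiq | hqi
  · have : i / p * p ≤ q * p := Nat.mul_le_mul_right p hiq
    exact ⟨i / p * p, hocc _ (by omega), hi_mod.1, by omega⟩
  · have : q * p ≤ i / p * p := Nat.mul_le_mul_right p hqi
    exact ⟨q * p, hocc _ hlast.le, by omega, by omega⟩

theorem stmt_14_general {α : Type*} (w : List α)
    (p : ℕ) (hp1 : 1 ≤ p) (hp2 : p ≤ w.length)
    (hper : ∀ i, i + p < w.length → w[i]? = w[i + p]?) :
    IsCover (w.take (p + w.length % p)) w := by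
  have per : w.HasPeriod p := List.hasPeriod_iff_getElem?.mpr fun i hi ↦ hper i (by omega)
  have hdiv := Nat.div_add_mod w.length p
  have hq : 1 ≤ w.length / p := (Nat.one_le_div_iff hp1).mpr hp2
  have hfit : p + w.length % p ≤ w.length := by nlinarith
  have hlen : (w.take (p + w.length % p)).length = p + w.length % p := by simpa using hfit
  refine isCover_of_occurs_mul hp1 (by omega) (by omega) ⟨w.length / p - 1, ?_⟩
    fun k hk ↦ per.occurs_take (by omega)
  rw [hlen, Nat.mul_sub_one]
  omega

/-- Let `w` be a non-empty string and `p` a period of `w` (`1 ≤ p ≤ |w|` and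
`w[i] = w[i+p]` whenever `i + p < |w|`).  Then the prefix of `w` of length
`p + (|w| mod p)` is a cover of `w`. -/
theorem stmt_14 {α : Type*} (w : List α) (hw : w ≠ [])
    (p : ℕ) (hp1 : 1 ≤ p) (hp2 : p ≤ w.length)
    (hper : ∀ i, i + p < w.length → w[i]? = w[i + p]?) :
    IsCover (w.take (p + w.length % p)) w :=
  stmt_14_general w p hp1 hp2 hper
end

section
/- Let x be a non-empty string, let w be a cover of x, and let p be a period of w (1 ≤ p ≤ |w|). Then the prefix of w of length p + (|w| mod p) is a cover of x. In particular, any cover of x whose length exceeds p + (|w| mod p) for some period p of it can be replaced by a strictly shorter cover of x. -/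
/-! The prefix `u` of `w` of length `p + |w| mod p` occurs in `w` at every multiple of `p` where
it fits, because `w.drop (p * k)` is again a prefix of `w`. These occurrences, together with the
one ending at the end of `w` (which starts at a multiple of `p` too), cover `w`, so `u` covers `w`;
and covering is transitive, since an occurrence of `u` inside an occurrence of `w` is an
occurrence of `u`. -/

section

variable {α : Type*}

theorem occurs_iff_isPrefix_drop {v x : List α} {j : ℕ} : Occurs v x j ↔ v <+: x.drop j := by
  rw [List.prefix_iff_eq_take, eq_comm]
  rfl

theorem Occurs.trans {u v x : List α} {j k : ℕ} (hu : Occurs u v k) (hv : Occurs v x j) :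
    Occurs u x (j + k) := by
  rw [occurs_iff_isPrefix_drop, ← List.drop_drop] at *
  exact hu.trans (hv.drop k)

theorem IsCover.refl (v : List α) : IsCover v v := fun _ hi =>
  ⟨0, occurs_iff_isPrefix_drop.2 (List.prefix_refl v), Nat.zero_le _, by simpa using hi⟩

theorem IsCover.trans {u v x : List α} (huv : IsCover u v) (hvx : IsCover v x) : IsCover u x := by
  intro i hi
  obtain ⟨j, hj, hji, hij⟩ := hvx i hi
  obtain ⟨k, hk, hki, hik⟩ := huv (i - j) (by omega)
  exact ⟨j + k, hk.trans hj, by omega, by omega⟩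

namespace List

theorem drop_isPrefix_of_period {w : List α} {p : ℕ}
    (hper : ∀ i, i + p < w.length → w[i]? = w[i + p]?) : w.drop p <+: w := by
  rw [prefix_iff_getElem?]
  intro i hi
  rw [length_drop] at hi
  rw [hper i (by omega), getElem_drop, Nat.add_comm, getElem?_eq_getElem]

theorem drop_isPrefix_of_dvd {w : List α} {p j : ℕ} (hp : w.drop p <+: w) (hj : p ∣ j) :
    w.drop j <+: w := by
  obtain ⟨k, rfl⟩ := hj
  induction k with
  | zero => simp
  | succ k ih =>
    rw [Nat.mul_succ, Nat.add_comm, ← drop_drop]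
    exact (hp.drop (p * k)).trans ih

theorem occurs_take_of_dvd {w : List α} {p j n : ℕ} (hp : w.drop p <+: w) (hj : p ∣ j)
    (hjn : j + n ≤ w.length) : Occurs (w.take n) w j := by
  rw [occurs_iff_isPrefix_drop]
  refine prefix_of_prefix_length_le (take_prefix n w) (drop_isPrefix_of_dvd hp hj) ?_
  simp only [length_take, length_drop]
  omega

theorem isCover_take_add_mod {w : List α} {p : ℕ} (hp : w.drop p <+: w) :
    IsCover (w.take (p + w.length % p)) w := by
  set q := p + w.length % p with hq_def
  rcases le_or_gt w.length q with hq | hq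
  · rw [take_of_length_le hq]
    exact IsCover.refl w
  have hp0 : 0 < p := Nat.pos_of_ne_zero fun h => by simp [q, h] at hq
  intro i hi
  rw [length_take_of_le hq.le]
  by_cases hfit : p * (i / p) + q ≤ w.length
  · have := Nat.lt_mul_div_succ i hp0
    exact ⟨p * (i / p), occurs_take_of_dvd hp (dvd_mul_right _ _) hfit, Nat.mul_div_le i p,
      by rw [Nat.mul_succ] at this; omega⟩
  · have hdvd : p ∣ w.length - q := by
      rw [hq_def, Nat.sub_add_eq, Nat.sub_right_comm]
      exact Nat.dvd_sub (Nat.dvd_sub_mod _) dvd_rfl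
    have := Nat.mul_div_le i p
    exact ⟨w.length - q, occurs_take_of_dvd hp hdvd (by omega), by omega, by omega⟩

end List

end

theorem stmt_16_general {α : Type*} (x w : List α)
    (hw : IsCover w x)
    (p : ℕ)
    (hper : ∀ i, i + p < w.length → w[i]? = w[i + p]?) :
    IsCover (w.take (p + w.length % p)) x ∧
    (p + w.length % p < w.length →
      ∃ v : List α, IsCover v x ∧ v.length < w.length) := by
  have hcover := (List.isCover_take_add_mod (List.drop_isPrefix_of_period hper)).trans hw
  exact ⟨hcover, fun hlt => ⟨_, hcover, by simpa using hlt⟩⟩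

/-- Let `x` be a non-empty string, `w` a cover of `x`, and `p` a period of `w`
(`1 ≤ p ≤ |w|`).  Then the prefix of `w` of length `p + (|w| mod p)` is a cover
of `x`.  In particular, any cover of `x` whose length exceeds `p + (|w| mod p)`
for some period `p` of it can be replaced by a strictly shorter cover of `x`. -/
theorem stmt_16 {α : Type*} (x w : List α) (hx : x ≠ [])
    (hw : IsCover w x)
    (p : ℕ) (hp1 : 1 ≤ p) (hp2 : p ≤ w.length)
    (hper : ∀ i, i + p < w.length → w[i]? = w[i + p]?) :
    IsCover (w.take (p + w.length % p)) x ∧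
    (p + w.length % p < w.length →
      ∃ v : List α, IsCover v x ∧ v.length < w.length) :=
  stmt_16_general x w hw p hper
end
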